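/- For every J-self-orthogonal subspace D of ℂ⁴ there exists a unitary operator U : ℂ⁴₊ → ℂ⁴₋ such that D = D_U = {v + Uv : v ∈ ℂ⁴₊}. -/

import Mathlib

open Complex ComplexConjugate Matrix

/-- The matrix `J = (1/2)·[[0, −i, 0, 0], [i, 0, 0, 0], [0, 0, 0, i], [0, 0, −i, 0]]`. -/
noncomputable def Jmat : Matrix (Fin 4) (Fin 4) ℂ :=
  (1 / 2 : ℂ) • !![0, -I, 0, 0; I, 0, 0, 0; 0, 0, 0, I; 0, 0, -I, 0]

/-- `P₊ = (1/2)I + J`. -/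
noncomputable def Pplus : Matrix (Fin 4) (Fin 4) ℂ := (1 / 2 : ℂ) • 1 + Jmat

/-- `P₋ = (1/2)I − J`. -/
noncomputable def Pminus : Matrix (Fin 4) (Fin 4) ℂ := (1 / 2 : ℂ) • 1 - Jmat

/-- The standard Hermitian inner product on `ℂ⁴`, conjugate-linear in the second argument. -/
noncomputable def herm (x y : Fin 4 → ℂ) : ℂ := ∑ i, x i * conj (y i)

/-- `ℂ⁴₊ = P₊(ℂ⁴)`, the range of `P₊`. -/
noncomputable def Cplus : Submodule ℂ (Fin 4 → ℂ) := LinearMap.range Pplus.mulVecLin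

/-- `ℂ⁴₋ = P₋(ℂ⁴)`, the range of `P₋`. -/
noncomputable def Cminus : Submodule ℂ (Fin 4 → ℂ) := LinearMap.range Pminus.mulVecLin

/-!
`J = (P₊ - P₋) / 2` is half the reflection of `ℂ⁴` in `ℂ⁴₊`, so the indefinite form is
`⟪x, J y⟫ = (⟪P₊ x, P₊ y⟫ - ⟪P₋ x, P₋ y⟫) / 2`. On a self-orthogonal `D` this forces
`⟪P₊ x, P₊ y⟫ = ⟪P₋ x, P₋ y⟫`, so both projections are injective on `D`. They are also onto:
a vector of `ℂ⁴₊` orthogonal to `P₊ D` is `J`-orthogonal to `D`, hence lies in `D`, and is killed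
by `P₋`. Then `U = P₋ ∘ (P₊|_D)⁻¹` is unitary and `D = {P₊ x + P₋ x : x ∈ D}` is its graph.
-/

namespace Submodule

variable {𝕜 E : Type*} [RCLike 𝕜] [NormedAddCommGroup E] [InnerProductSpace 𝕜 E]
variable (K : Submodule 𝕜 E) [K.HasOrthogonalProjection]

/-- `⟪x, K.reflection y⟫` is the indefinite inner product of the Krein space with fundamental
decomposition `E = K ⊕ Kᗮ`. -/
def IsReflectionSelfOrthogonal (D : Submodule 𝕜 E) : Prop :=
  ∀ x, x ∈ D ↔ ∀ y ∈ D, inner 𝕜 x (K.reflection y) = 0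

lemma inner_reflection_eq_sub (x y : E) :
    inner 𝕜 x (K.reflection y) =
      inner 𝕜 (K.orthogonalProjectionOnto x) (K.orthogonalProjectionOnto y) -
        inner 𝕜 (Kᗮ.orthogonalProjectionOnto x) (Kᗮ.orthogonalProjectionOnto y) := by
  have : K.reflection y = K.starProjection y - Kᗮ.starProjection y := by
    rw [reflection_apply, starProjection_orthogonal', _root_.sub_apply, one_apply_eq_self, two_smul]
    abel
  simp only [this, inner_sub_right, starProjection_apply,
    inner_orthogonalProjectionOnto_eq_of_mem_right]

variable {K} {D : Submodule 𝕜 E}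

lemma IsReflectionSelfOrthogonal.orthogonal (hD : K.IsReflectionSelfOrthogonal D) :
    Kᗮ.IsReflectionSelfOrthogonal D := by
  simpa [IsReflectionSelfOrthogonal, reflection_orthogonal_apply] using hD

lemma IsReflectionSelfOrthogonal.inner_orthogonalProjectionOnto_orthogonal
    (hD : K.IsReflectionSelfOrthogonal D) {x y : E} (hx : x ∈ D) (hy : y ∈ D) :
    inner 𝕜 (Kᗮ.orthogonalProjectionOnto x) (Kᗮ.orthogonalProjectionOnto y) =
      inner 𝕜 (K.orthogonalProjectionOnto x) (K.orthogonalProjectionOnto y) := by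
  rw [eq_comm, ← sub_eq_zero, ← inner_reflection_eq_sub]
  exact (hD x).1 hx y hy

lemma IsReflectionSelfOrthogonal.eq_zero_of_orthogonalProjectionOnto_eq_zero
    (hD : K.IsReflectionSelfOrthogonal D) {x : E} (hx : x ∈ D)
    (h : K.orthogonalProjectionOnto x = 0) : x = 0 := by
  have h' : Kᗮ.orthogonalProjectionOnto x = 0 := by
    rw [← inner_self_eq_zero (𝕜 := 𝕜), hD.inner_orthogonalProjectionOnto_orthogonal hx hx, h,
      inner_zero_left]
  rw [← K.starProjection_add_starProjection_orthogonal x]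
  simp [starProjection_apply, h, h']

lemma IsReflectionSelfOrthogonal.bijective_orthogonalProjectionOnto [FiniteDimensional 𝕜 E]
    (hD : K.IsReflectionSelfOrthogonal D) :
    Function.Bijective (K.orthogonalProjectionOnto.toLinearMap ∘ₗ D.subtype) := by
  refine ⟨?_, ?_⟩
  · rw [← LinearMap.ker_eq_bot, LinearMap.ker_eq_bot']
    intro x hx
    exact Subtype.ext (hD.eq_zero_of_orthogonalProjectionOnto_eq_zero x.2 hx)
  · rw [← LinearMap.range_eq_top, ← orthogonal_eq_bot_iff, eq_bot_iff]
    intro w hw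
    have hwD : (w : E) ∈ D := by
      refine (hD w).2 fun y hy => ?_
      have hwy : inner 𝕜 w (K.orthogonalProjectionOnto y) = 0 :=
        (mem_orthogonal' _ _).1 hw _ ⟨⟨y, hy⟩, rfl⟩
      rw [inner_reflection_eq_sub, orthogonalProjectionOnto_mem_subspace_eq_self,
        orthogonalProjectionOnto_orthogonal_apply_eq_zero w.2, hwy, inner_zero_left, sub_zero]
    rw [mem_bot, ← coe_eq_zero]
    exact hD.orthogonal.eq_zero_of_orthogonalProjectionOnto_eq_zero hwD
      (orthogonalProjectionOnto_orthogonal_apply_eq_zero w.2)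

theorem IsReflectionSelfOrthogonal.exists_linearIsometryEquiv_graph [FiniteDimensional 𝕜 E]
    (hD : K.IsReflectionSelfOrthogonal D) :
    ∃ U : K ≃ₗᵢ[𝕜] Kᗮ, ∀ x, x ∈ D ↔ ∃ v : K, (v : E) + U v = x := by
  let f := LinearEquiv.ofBijective _ hD.bijective_orthogonalProjectionOnto
  let g := LinearEquiv.ofBijective _ hD.orthogonal.bijective_orthogonalProjectionOnto
  have hfg : ∀ x y, inner 𝕜 (g x) (g y) = inner 𝕜 (f x) (f y) := fun x y =>
    hD.inner_orthogonalProjectionOnto_orthogonal x.2 y.2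
  have hfg_add : ∀ z : D, (f z : E) + g z = z := fun z =>
    K.starProjection_add_starProjection_orthogonal z
  refine ⟨(f.symm.trans g).isometryOfInner fun v w => ?_, fun x => ⟨fun hx => ?_, ?_⟩⟩
  · simpa using hfg (f.symm v) (f.symm w)
  · exact ⟨f ⟨x, hx⟩, by simpa using hfg_add ⟨x, hx⟩⟩
  · rintro ⟨v, rfl⟩
    obtain ⟨z, rfl⟩ := f.surjective v
    simp [hfg_add]

end Submodule

open WithLp

section

variable {𝕜 m n : Type*} [RCLike 𝕜] [Fintype n] [DecidableEq n]

lemma Matrix.map_range_mulVecLin (A : Matrix m n 𝕜) :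
    (LinearMap.range A.mulVecLin).map (WithLp.linearEquiv 2 𝕜 (m → 𝕜)).symm.toLinearMap =
      (toEuclideanLin A).range := by
  ext x
  simp only [Submodule.mem_map_equiv, LinearMap.mem_range, mulVecLin_apply]
  refine ⟨fun ⟨y, hy⟩ => ⟨toLp 2 y, ?_⟩, fun ⟨y, hy⟩ => ⟨ofLp y, ?_⟩⟩
  · simp [hy]
  · simp [← hy]

lemma Matrix.toEuclideanCLM_eq_starProjection {A : Matrix n n 𝕜} (hA : IsStarProjection A) :
    toEuclideanCLM (𝕜 := 𝕜) A = (toEuclideanLin A).range.starProjection :=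
  ContinuousLinearMap.IsStarProjection.ext (hA.map _) isStarProjection_starProjection
    (Submodule.range_starProjection _).symm

end

lemma Jmat_mul_self : Jmat * Jmat = (1 / 4 : ℂ) • 1 := by
  ext i j
  fin_cases i <;> fin_cases j <;>
    simp [Jmat, Matrix.mul_apply, Fin.sum_univ_four] <;> ring_nf <;>
    simp [Complex.I_sq] <;> ring

lemma conjTranspose_Jmat : Jmatᴴ = Jmat := by
  ext i j
  fin_cases i <;> fin_cases j <;> simp [Jmat]

lemma isStarProjection_Pplus : IsStarProjection Pplus where
  isIdempotentElem := by
    simp only [IsIdempotentElem, Pplus, add_mul, mul_add, smul_mul_assoc, mul_smul_comm, one_mul,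
      mul_one, Jmat_mul_self]
    module
  isSelfAdjoint := by
    rw [IsSelfAdjoint, Pplus, star_add, star_smul, star_one, star_eq_conjTranspose,
      conjTranspose_Jmat]
    norm_num

lemma Pminus_eq_one_sub_Pplus : Pminus = 1 - Pplus := by
  rw [Pminus, Pplus]; module

lemma two_smul_Jmat : (2 : ℂ) • Jmat = (2 : ℂ) • Pplus - 1 := by
  rw [Pplus]; module

noncomputable abbrev toEuclidean4 : (Fin 4 → ℂ) ≃ₗ[ℂ] EuclideanSpace ℂ (Fin 4) :=
  (WithLp.linearEquiv 2 ℂ (Fin 4 → ℂ)).symm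

lemma starProjection_map_Cplus :
    (Cplus.map toEuclidean4.toLinearMap).starProjection = toEuclideanCLM (𝕜 := ℂ) Pplus := by
  simp only [Cplus, map_range_mulVecLin]
  exact (toEuclideanCLM_eq_starProjection isStarProjection_Pplus).symm

lemma map_Cminus_eq_orthogonal :
    Cminus.map toEuclidean4.toLinearMap = (Cplus.map toEuclidean4.toLinearMap)ᗮ := by
  rw [Cminus, map_range_mulVecLin, ← coe_toEuclideanCLM_eq_toEuclideanLin, Pminus_eq_one_sub_Pplus,
    map_sub, map_one, ← starProjection_map_Cplus, ← Submodule.starProjection_orthogonal',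
    Submodule.range_starProjection]

lemma reflection_map_Cplus (y : EuclideanSpace ℂ (Fin 4)) :
    (Cplus.map toEuclidean4.toLinearMap).reflection y = toLp 2 (((2 : ℂ) • Jmat) *ᵥ ofLp y) := by
  rw [Submodule.reflection_apply, starProjection_map_Cplus, two_smul_Jmat]
  ext i
  simp [sub_mulVec, smul_mulVec]

lemma herm_eq_inner (x y : Fin 4 → ℂ) : herm x y = inner ℂ (toLp 2 y) (toLp 2 x) := by
  simp [herm, PiLp.inner_apply]

lemma two_mul_herm_Jmat (x y : EuclideanSpace ℂ (Fin 4)) :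
    2 * herm (ofLp x) (Jmat *ᵥ ofLp y) =
      inner ℂ ((Cplus.map toEuclidean4.toLinearMap).reflection y) x := by
  rw [reflection_map_Cplus, herm_eq_inner, smul_mulVec, WithLp.toLp_smul, inner_smul_left,
    map_ofNat]

lemma isReflectionSelfOrthogonal_map_Cplus {D : Submodule ℂ (Fin 4 → ℂ)}
    (hD : (D : Set (Fin 4 → ℂ)) = {x | ∀ y ∈ D, herm x (Jmat.mulVec y) = 0}) :
    (Cplus.map toEuclidean4.toLinearMap).IsReflectionSelfOrthogonal
      (D.map toEuclidean4.toLinearMap) := by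
  have hmem : ∀ z, z ∈ D.map toEuclidean4.toLinearMap ↔ ofLp z ∈ D := fun z => by simp
  intro x
  rw [hmem, ← SetLike.mem_coe, hD]
  refine ⟨fun h y hy => ?_, fun h y hy => ?_⟩
  · rw [inner_eq_zero_symm, ← two_mul_herm_Jmat, h _ ((hmem y).1 hy), mul_zero]
  · have := h (toLp 2 y) ((hmem _).2 hy)
    rw [inner_eq_zero_symm, ← two_mul_herm_Jmat] at this
    simpa using this

/-- for every `J`-self-orthogonal subspace `D` of `ℂ⁴` there exists a unitary
operator `U : ℂ⁴₊ → ℂ⁴₋` (a bijective inner-product-preserving linear map) such that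
`D = D_U = {v + Uv : v ∈ ℂ⁴₊}`. -/
theorem J_self_orthogonal_is_graph_of_unitary (D : Submodule ℂ (Fin 4 → ℂ))
    (hD : (D : Set (Fin 4 → ℂ)) = {x | ∀ y ∈ D, herm x (Jmat.mulVec y) = 0}) :
    ∃ U : Cplus →ₗ[ℂ] Cminus, Function.Bijective U ∧
      (∀ v w : Cplus, herm (U v : Fin 4 → ℂ) (U w : Fin 4 → ℂ) = herm v w) ∧
      (D : Set (Fin 4 → ℂ)) =
        {x : Fin 4 → ℂ | ∃ v : Cplus, (v : Fin 4 → ℂ) + (U v : Fin 4 → ℂ) = x} := by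
  obtain ⟨U, hU⟩ := (isReflectionSelfOrthogonal_map_Cplus hD).exists_linearIsometryEquiv_graph
  let φplus := toEuclidean4.submoduleMap Cplus
  let φminus := (toEuclidean4.submoduleMap Cminus).trans
    (LinearEquiv.ofEq _ _ map_Cminus_eq_orthogonal)
  let V : Cplus ≃ₗ[ℂ] Cminus := φplus.trans (U.toLinearEquiv.trans φminus.symm)
  have hV : ∀ v, toLp 2 ((V : Cplus →ₗ[ℂ] Cminus) v : Fin 4 → ℂ) = U (φplus v) := fun v =>
    congrArg Subtype.val (φminus.apply_symm_apply _)
  refine ⟨V, V.bijective, fun v w => ?_, Set.ext fun x => ?_⟩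
  · rw [herm_eq_inner, herm_eq_inner, hV, hV, ← Submodule.coe_inner]
    exact LinearIsometryEquiv.inner_map_map (𝕜 := ℂ) U (φplus w) (φplus v)
  · have hx : x ∈ D ↔ toLp 2 x ∈ D.map toEuclidean4.toLinearMap := by simp
    rw [SetLike.mem_coe, hx, hU, ← φplus.toEquiv.exists_congr_right]
    refine exists_congr fun v => ?_
    rw [LinearEquiv.coe_toEquiv, ← hV]
    change toLp 2 (v : Fin 4 → ℂ) + _ = _ ↔ _
    rw [← WithLp.toLp_add, (WithLp.toLp_injective 2).eq_iff]
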